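/- arXiv:1506.08873 — 2 statements merged into one kernel-verified Lean document; each statement's English description precedes it below -/
import Mathlib

section
/- Let (R,Δ) be an odd form ring, n ∈ ℕ, I an involution invariant ideal of R, σ ∈ U_{2n+1}(R,Δ), and u ∈ M with u_i ∈ I for all i ∈ Θ_hb. Then q(σu) ∸ q(u) ∸ ((q(σ_{*0}) ∸ (1,0))•u₀) ∈ Ω^I_min, where σ_{*0} denotes the 0-th column of σ. -/
/-!
Write `F(v) = q(σv) ∸ q(v)`. When `v₀ = 0` the element `q(v)` is central in `(R², ∔)`, so
expanding `q(v + w)` with the help of `b(σv, σw) = b(v, w)` gives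
`F(v + w) = F(v) ∔ F(w) ∔ (0, z - z̄λ)`, where `z` is built from the entries `v_{-i}` and
`(σv)_{-i}` and hence lies in `I` as soon as `v` does. Splitting the hyperbolic part of `u` into
vectors `e_j x` with `F(e_j x) = F(e_j) • x` and `F(e_j) ∈ Δ` shows that `F` of it lies in
`Ω^I_min`; the remaining summand `e₀ u₀` contributes exactly `F(e₀) • u₀ = (q(σ_{*0}) ∸ (1,0)) • u₀`.
-/

open scoped BigOperators

noncomputable section

/-- The index set `Θ = {-n, …, n}` for the odd-dimensional unitary group. -/
abbrev Idx (n : ℕ) : Type := {i : ℤ // i ∈ Finset.Icc (-(n : ℤ)) (n : ℤ)}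

namespace Idx

/-- Negation of an index. -/
def neg {n : ℕ} (i : Idx n) : Idx n :=
  ⟨-i.1, by have h := i.2; rw [Finset.mem_Icc] at h ⊢; omega⟩

/-- The index `0`. -/
def zero (n : ℕ) : Idx n := ⟨0, by rw [Finset.mem_Icc]; omega⟩

/-- Construct an index from an integer. -/
def of (n : ℕ) (i : ℤ) (h1 : -(n : ℤ) ≤ i) (h2 : i ≤ (n : ℤ)) : Idx n :=
  ⟨i, Finset.mem_Icc.mpr ⟨h1, h2⟩⟩

end Idx

/-- The positive indices `{1, …, n}`. -/
def posIdx (n : ℕ) : Finset (Idx n) := Finset.univ.filter (fun i => 0 < i.1)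

/-- The position of an index in the ordering `1, …, n, 0, -n, …, -1`. -/
def ordIdx {n : ℕ} (i : Idx n) : ℤ :=
  if 0 < i.1 then i.1 else if i.1 = 0 then (n : ℤ) + 1 else 2 * (n : ℤ) + 2 + i.1

/-- The group `GL_{2n+1}(R)` of invertible `(2n+1) × (2n+1)` matrices. -/
abbrev GLn (R : Type*) [Ring R] (n : ℕ) : Type _ := (Matrix (Idx n) (Idx n) R)ˣ

/-- `J(Ω) = {y | ∃ z, (y, z) ∈ Ω}`. -/
def JSet {R : Type*} (Ω : Set (R × R)) : Set R := {y | ∃ z, (y, z) ∈ Ω}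

/-- `M(R, Δ) = {u | u_0 ∈ J(Δ)}`. -/
def MRD {R : Type*} (Δ : Set (R × R)) (n : ℕ) : Set (Idx n → R) :=
  {u | u (Idx.zero n) ∈ JSet Δ}

/-- `M(I, Ω) = {u | u_i ∈ I for i ∈ Θ_hb, u_0 ∈ J(Ω)}`. -/
def MIO {R : Type*} (I : Set R) (Ω : Set (R × R)) (n : ℕ) : Set (Idx n → R) :=
  {u | (∀ i : Idx n, i.1 ≠ 0 → u i ∈ I) ∧ u (Idx.zero n) ∈ JSet Ω}

/-- The data of an odd quadruple `(R, ⁻, λ, μ)`: a ring with an anti-isomorphism `bar`,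
a symmetry `lam` and an element `mu` with `mu = bar mu * lam`. -/
structure OddFormRingData (R : Type*) [Ring R] where
  bar : R → R
  lam : R
  mu : R
  bar_bijective : Function.Bijective bar
  bar_add : ∀ x y : R, bar (x + y) = bar x + bar y
  bar_mul : ∀ x y : R, bar (x * y) = bar y * bar x
  bar_one : bar 1 = 1
  bar_bar : ∀ x : R, bar (bar x) = lam * x * bar lam
  mu_symm : mu = bar mu * lam

namespace OddFormRingData

variable {R : Type*} [Ring R] (D : OddFormRingData R)

/-- Heisenberg addition `∔` on `R × R`. -/
def hAdd (a b : R × R) : R × R := (a.1 + b.1, a.2 + b.2 - D.bar a.1 * D.mu * b.1)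

/-- Heisenberg negation. -/
def hNeg (a : R × R) : R × R := (-a.1, -a.2 - D.bar a.1 * D.mu * a.1)

/-- Heisenberg subtraction `∸`. -/
def hSub (a b : R × R) : R × R := D.hAdd a (D.hNeg b)

/-- The scalar operation `(x, y) • a = (x a, ā y a)`. -/
def hSMul (a : R × R) (r : R) : R × R := (a.1 * r, D.bar r * a.2 * r)

/-- `Δ_min = {(0, x - x̄ λ) | x ∈ R}`. -/
def DeltaMin : Set (R × R) := {p | ∃ x : R, p = (0, x - D.bar x * D.lam)}

/-- `Δ_max = {(x, y) | x̄ μ x + y + ȳ λ = 0}`. -/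
def DeltaMax : Set (R × R) := {p | D.bar p.1 * D.mu * p.1 + p.2 + D.bar p.2 * D.lam = 0}

/-- `Δ` is an odd form parameter. -/
structure IsFormParam (Δ : Set (R × R)) : Prop where
  add_mem : ∀ a ∈ Δ, ∀ b ∈ Δ, D.hAdd a b ∈ Δ
  neg_mem : ∀ a ∈ Δ, D.hNeg a ∈ Δ
  smul_mem : ∀ a ∈ Δ, ∀ r : R, D.hSMul a r ∈ Δ
  min_le : D.DeltaMin ⊆ Δ
  le_max : Δ ⊆ D.DeltaMax

/-- `I` is an involution invariant (two-sided) ideal of `R`. -/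
structure IsInvIdeal (I : Set R) : Prop where
  zero_mem : (0 : R) ∈ I
  add_mem : ∀ x ∈ I, ∀ y ∈ I, x + y ∈ I
  neg_mem : ∀ x ∈ I, -x ∈ I
  mul_left : ∀ r : R, ∀ x ∈ I, r * x ∈ I
  mul_right : ∀ r : R, ∀ x ∈ I, x * r ∈ I
  bar_mem : ∀ x ∈ I, D.bar x ∈ I

/-- `Ĩ = {x | ȳ μ x ∈ I for all y ∈ J(Δ)}`. -/
def tildeI (Δ : Set (R × R)) (I : Set R) : Set R :=
  {x | ∀ y ∈ JSet Δ, D.bar y * D.mu * x ∈ I}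

/-- `Ω^I_min`, the `∔`-subgroup of `R × R` generated by `{(0, x - x̄λ) | x ∈ I}` and
`{a • c | a ∈ Δ, c ∈ I}`. -/
inductive OmegaMin (Δ : Set (R × R)) (I : Set R) : R × R → Prop
  | base (x : R) (hx : x ∈ I) : OmegaMin Δ I (0, x - D.bar x * D.lam)
  | smul (a : R × R) (ha : a ∈ Δ) (c : R) (hc : c ∈ I) : OmegaMin Δ I (D.hSMul a c)
  | add (a b : R × R) : OmegaMin Δ I a → OmegaMin Δ I b → OmegaMin Δ I (D.hAdd a b)
  | neg (a : R × R) : OmegaMin Δ I a → OmegaMin Δ I (D.hNeg a)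

/-- `Ω^I_min` as a set. -/
def OmegaMinSet (Δ : Set (R × R)) (I : Set R) : Set (R × R) := {p | D.OmegaMin Δ I p}

/-- `Ω^I_max = Δ ∩ (Ĩ × I)`. -/
def OmegaMaxSet (Δ : Set (R × R)) (I : Set R) : Set (R × R) :=
  {p | p ∈ Δ ∧ p.1 ∈ D.tildeI Δ I ∧ p.2 ∈ I}

/-- `Ω` is a relative odd form parameter for `I`. -/
structure IsRelFormParam (Δ : Set (R × R)) (I : Set R) (Ω : Set (R × R)) : Prop where
  add_mem : ∀ a ∈ Ω, ∀ b ∈ Ω, D.hAdd a b ∈ Ω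
  neg_mem : ∀ a ∈ Ω, D.hNeg a ∈ Ω
  smul_mem : ∀ a ∈ Ω, ∀ r : R, D.hSMul a r ∈ Ω
  min_le : D.OmegaMinSet Δ I ⊆ Ω
  le_max : Ω ⊆ D.OmegaMaxSet Δ I

/-- `(I, Ω)` is an odd form ideal of `(R, Δ)`. -/
def IsFormIdeal (Δ : Set (R × R)) (I : Set R) (Ω : Set (R × R)) : Prop :=
  D.IsInvIdeal I ∧ D.IsRelFormParam Δ I Ω

/-- `Ω^{-1} = {(x, y) | (x, ȳ) ∈ Ω}`. -/
def paramInv (Ω : Set (R × R)) : Set (R × R) := {p | (p.1, D.bar p.2) ∈ Ω}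

/-- `Ω^{-ε(i)}`. -/
def paramPow {n : ℕ} (Ω : Set (R × R)) (i : Idx n) : Set (R × R) :=
  if 0 < i.1 then D.paramInv Ω else Ω

/-- The λ-Hermitian form `b`. -/
def bform {n : ℕ} (u v : Idx n → R) : R :=
  (∑ i ∈ posIdx n, D.bar (u i) * v i.neg) + D.bar (u (Idx.zero n)) * D.mu * v (Idx.zero n)
    + ∑ i ∈ posIdx n, D.bar (u i.neg) * D.lam * v i

/-- The quadratic map `q`. -/
def qform {n : ℕ} (u : Idx n → R) : R × R :=
  (u (Idx.zero n), ∑ i ∈ posIdx n, D.bar (u i) * u i.neg)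

/-- The odd-dimensional unitary group `U_{2n+1}(R, Δ)`, as a subset of `GL_{2n+1}(R)`. -/
def unitary (Δ : Set (R × R)) (n : ℕ) : Set (GLn R n) :=
  {σ | (∀ u v : Idx n → R,
          D.bform (Matrix.mulVec σ.val u)
            (Matrix.mulVec σ.val v) = D.bform u v)
      ∧ ∀ u : Idx n → R,
          D.hSub (D.qform (Matrix.mulVec σ.val u)) (D.qform u) ∈ Δ}

/-- The short root matrix `T_{ij}(x)`. -/
def shortRootMat {n : ℕ} (i j : Idx n) (x : R) : Matrix (Idx n) (Idx n) R :=
  1 + Matrix.single i j x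
    - Matrix.single j.neg i.neg
        ((if 0 < j.1 then (1 : R) else D.bar D.lam) * D.bar x *
          (if 0 < i.1 then (1 : R) else D.lam))

/-- The extra short root matrix `T_i(x, y)`. -/
def extraShortRootMat {n : ℕ} (i : Idx n) (x y : R) : Matrix (Idx n) (Idx n) R :=
  1 + Matrix.single (Idx.zero n) i.neg x
    - Matrix.single i (Idx.zero n)
        ((if 0 < i.1 then D.bar D.lam else (1 : R)) * D.bar x * D.mu)
    + Matrix.single i i.neg y

/-- `g` is a short root matrix `T_{ij}(x)`. -/
def IsShortRootElem {n : ℕ} (g : GLn R n) : Prop :=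
  ∃ (i j : Idx n) (x : R), i.1 ≠ 0 ∧ j.1 ≠ 0 ∧ i.1 ≠ j.1 ∧ i.1 ≠ -j.1 ∧
    g.val = D.shortRootMat i j x

/-- `g` is an extra short root matrix `T_i(x, y)` with `(x, y) ∈ Δ^{-ε(i)}`. -/
def IsExtraShortRootElem {n : ℕ} (Δ : Set (R × R)) (g : GLn R n) : Prop :=
  ∃ (i : Idx n) (x y : R), i.1 ≠ 0 ∧ (x, y) ∈ D.paramPow Δ i ∧
    g.val = D.extraShortRootMat i x y

/-- The elementary subgroup `EU_{2n+1}(R, Δ)`. -/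
def elemGroup (Δ : Set (R × R)) (n : ℕ) : Subgroup (GLn R n) :=
  Subgroup.closure {g | D.IsShortRootElem g ∨ D.IsExtraShortRootElem Δ g}

/-- `g` is an `(I, Ω)`-elementary short root matrix. -/
def IsRelShortRootElem {n : ℕ} (I : Set R) (g : GLn R n) : Prop :=
  ∃ (i j : Idx n) (x : R), i.1 ≠ 0 ∧ j.1 ≠ 0 ∧ i.1 ≠ j.1 ∧ i.1 ≠ -j.1 ∧ x ∈ I ∧
    g.val = D.shortRootMat i j x

/-- `g` is an `(I, Ω)`-elementary extra short root matrix. -/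
def IsRelExtraShortRootElem {n : ℕ} (Ω : Set (R × R)) (g : GLn R n) : Prop :=
  ∃ (i : Idx n) (x y : R), i.1 ≠ 0 ∧ (x, y) ∈ D.paramPow Ω i ∧
    g.val = D.extraShortRootMat i x y

/-- The preelementary subgroup `EU_{2n+1}(I, Ω)`. -/
def preElemGroup (I : Set R) (Ω : Set (R × R)) (n : ℕ) : Subgroup (GLn R n) :=
  Subgroup.closure {g | D.IsRelShortRootElem I g ∨ D.IsRelExtraShortRootElem Ω g}

/-- The relative elementary subgroup `EU_{2n+1}((R, Δ), (I, Ω))`,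
the normal closure of `EU_{2n+1}(I, Ω)` in `EU_{2n+1}(R, Δ)`. -/
def elemRelGroup (Δ : Set (R × R)) (I : Set R) (Ω : Set (R × R)) (n : ℕ) : Subgroup (GLn R n) :=
  Subgroup.closure {x | ∃ e ∈ D.elemGroup Δ n, ∃ g ∈ D.preElemGroup I Ω n, x = e * g * e⁻¹}

/-- The principal congruence subgroup `U_{2n+1}((R, Δ), (I, Ω))`. -/
def principalCongruence (Δ : Set (R × R)) (I : Set R) (Ω : Set (R × R)) (n : ℕ) :
    Set (GLn R n) :=
  {σ | σ ∈ D.unitary Δ n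
      ∧ (∀ i j : Idx n, i.1 ≠ 0 → j.1 ≠ 0 →
          σ.val i j - (if i = j then (1 : R) else 0) ∈ I)
      ∧ ∀ u ∈ MRD Δ n,
          D.hSub (D.qform (Matrix.mulVec σ.val u)) (D.qform u) ∈ Ω}

/-- The group `Ũ_{2n+1}((R, Δ), (I, Ω))`. -/
def tildeU (Δ : Set (R × R)) (I : Set R) (Ω : Set (R × R)) (n : ℕ) : Set (GLn R n) :=
  {σ | σ ∈ D.unitary Δ n ∧ ∀ u ∈ MIO I Ω n,
      D.hSub (D.qform (Matrix.mulVec σ.val u)) (D.qform u) ∈ Ω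
      ∧ D.hSub (D.qform (Matrix.mulVec ((σ⁻¹).val) u)) (D.qform u) ∈ Ω}

/-- The full congruence subgroup `CU_{2n+1}((R, Δ), (I, Ω))`. -/
def fullCongruence (Δ : Set (R × R)) (I : Set R) (Ω : Set (R × R)) (n : ℕ) : Set (GLn R n) :=
  {σ | σ ∈ D.tildeU Δ I Ω n ∧ ∀ τ ∈ D.elemGroup Δ n,
      σ * τ * σ⁻¹ * τ⁻¹ ∈ D.principalCongruence Δ I Ω n}

/-- `H` is a subgroup of `U_{2n+1}(R, Δ)`. -/
structure IsSubgroupOfUnitary (Δ : Set (R × R)) (n : ℕ) (H : Set (GLn R n)) : Prop where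
  subset : H ⊆ D.unitary Δ n
  one_mem : (1 : GLn R n) ∈ H
  mul_mem : ∀ a ∈ H, ∀ b ∈ H, a * b ∈ H
  inv_mem : ∀ a ∈ H, a⁻¹ ∈ H

/-- `H` is normalized by the elementary subgroup `EU_{2n+1}(R, Δ)`. -/
def IsENormal (Δ : Set (R × R)) (n : ℕ) (H : Set (GLn R n)) : Prop :=
  ∀ e ∈ D.elemGroup Δ n, ∀ h ∈ H, e * h * e⁻¹ ∈ H

/-- The ideal part of the level of `H`. -/
def levelI {n : ℕ} (H : Set (GLn R n)) : Set R :=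
  {x | ∃ i j : Idx n, i.1 ≠ 0 ∧ j.1 ≠ 0 ∧ i.1 ≠ j.1 ∧ i.1 ≠ -j.1 ∧
      ∃ g ∈ H, g.val = D.shortRootMat i j x}

/-- The form parameter part of the level of `H`. -/
def levelOmega {n : ℕ} (Δ : Set (R × R)) (H : Set (GLn R n)) : Set (R × R) :=
  {p | p ∈ Δ ∧ ∃ i : Idx n, i.1 < 0 ∧
      ∃ g ∈ H, g.val = D.extraShortRootMat i p.1 p.2}

/-- The relative odd form parameter `^σΩ` for `I` defined by `Ω` and `σ`. -/
def transportedParam (Δ : Set (R × R)) (I : Set R) (Ω : Set (R × R)) (n : ℕ) (σ : GLn R n) :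
    Set (R × R) :=
  {p | ∃ x y : R, (x, y) ∈ Ω ∧ ∃ m ∈ D.OmegaMinSet Δ I,
      p = D.hAdd (D.hAdd
            (D.hSMul
              (D.hSub (D.qform (fun i => σ.val i (Idx.zero n)))
                ((1 : R), (0 : R))) x)
            (x, y)) m}

/-- `TEU_{2n+1}(R, Δ)`: upper triangular elementary matrices with ones on the diagonal,
with respect to the index ordering `1, …, n, 0, -n, …, -1`. -/
def upperTriangularElem (Δ : Set (R × R)) (n : ℕ) : Set (GLn R n) :=
  {f | f ∈ D.elemGroup Δ n
      ∧ (∀ i j : Idx n, ordIdx j < ordIdx i → f.val i j = 0)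
      ∧ ∀ i : Idx n, f.val i i = 1}

/-- `UEU_{2n+1}(R, Δ)`: elementary matrices of block form `(A B C; 0 1 D; 0 0 E)`
with respect to the decomposition `Θ₊, {0}, Θ₋`. -/
def blockUpperElem (Δ : Set (R × R)) (n : ℕ) : Set (GLn R n) :=
  {f | f ∈ D.elemGroup Δ n
      ∧ (∀ i j : Idx n, i.1 ≤ 0 → 0 < j.1 → f.val i j = 0)
      ∧ f.val (Idx.zero n) (Idx.zero n) = 1
      ∧ ∀ i : Idx n, i.1 < 0 → f.val i (Idx.zero n) = 0}

/-- `R` is quasifinite: it is the union of a directed family of subrings, each closed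
under the involution, containing `λ` and `μ`, and finitely generated as a module over its
center. -/
def IsQuasifinite : Prop :=
  ∃ S : Set (Subring R), S.Nonempty ∧ DirectedOn (· ≤ ·) S ∧
    (∀ A ∈ S, (∀ x ∈ A, D.bar x ∈ A) ∧ D.lam ∈ A ∧ D.mu ∈ A ∧
      ∃ (m : ℕ) (v : Fin m → R), (∀ k, v k ∈ A) ∧
        ∀ x ∈ A, ∃ c : Fin m → R,
          (∀ k, c k ∈ A ∧ ∀ y ∈ A, c k * y = y * c k) ∧ x = ∑ k, c k * v k) ∧
    ∀ x : R, ∃ A ∈ S, x ∈ A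

end OddFormRingData

/-- The Jacobson radical of a (possibly noncommutative) ring. -/
def jacobsonRadical (R : Type*) [Ring R] : Ideal R := sInf {J : Ideal R | J.IsMaximal}

/-- `R` is semilocal: `R / rad R` is semisimple (hence semisimple Artinian). -/
def IsSemilocalRing (R : Type*) [Ring R] : Prop :=
  IsSemisimpleModule R (R ⧸ jacobsonRadical R)

/-- A bundled (possibly noncommutative) ring. -/
structure BundledRing : Type (u + 1) where
  carrier : Type u
  [str : Ring carrier]

attribute [instance] BundledRing.str

instance : CoeSort BundledRing (Type u) := ⟨BundledRing.carrier⟩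

universe u

namespace OddFormRingData

open scoped Matrix

variable {R : Type*} [Ring R] (D : OddFormRingData R)

section Involution

def barAddHom : R →+ R := AddMonoidHom.mk' D.bar D.bar_add

lemma bar_zero : D.bar 0 = 0 := map_zero D.barAddHom

lemma bar_neg (x : R) : D.bar (-x) = -D.bar x := map_neg D.barAddHom x

lemma bar_sub (x y : R) : D.bar (x - y) = D.bar x - D.bar y := map_sub D.barAddHom x y

lemma bar_sum {ι : Type*} (s : Finset ι) (f : ι → R) :
    D.bar (∑ i ∈ s, f i) = ∑ i ∈ s, D.bar (f i) :=
  map_sum D.barAddHom f s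

lemma bar_lam_mul_lam : D.bar D.lam * D.lam = 1 := by
  have lam_mul_bar_lam : D.lam * D.bar D.lam = 1 := by
    simpa [D.bar_one] using (D.bar_bar 1).symm
  apply D.bar_bijective.injective
  apply D.bar_bijective.injective
  rw [D.bar_bar, D.bar_one, D.bar_one]
  calc D.lam * (D.bar D.lam * D.lam) * D.bar D.lam
      = (D.lam * D.bar D.lam) * (D.lam * D.bar D.lam) := by noncomm_ring
    _ = 1 := by rw [lam_mul_bar_lam, one_mul]

end Involution

section Heisenberg

lemma hSub_hAdd_hAdd_cancel (x a : R × R) (y : R) :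
    D.hSub (D.hAdd (D.hAdd x a) (0, y)) a = D.hAdd x (0, y) := by
  ext
  · simp only [hSub, hAdd, hNeg]
    abel
  · simp only [hSub, hAdd, hNeg, D.bar_add, D.bar_zero]
    noncomm_ring

lemma hSub_hAdd_cancel (a b : R × R) : D.hAdd (D.hSub a b) b = a := by
  ext
  · simp only [hSub, hAdd, hNeg]
    abel
  · simp only [hSub, hAdd, hNeg, D.bar_add, D.bar_neg]
    noncomm_ring

lemma hSMul_hSub (a b : R × R) (r : R) :
    D.hSMul (D.hSub a b) r = D.hSub (D.hSMul a r) (D.hSMul b r) := by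
  ext <;> simp only [hSub, hAdd, hNeg, hSMul, D.bar_mul] <;> noncomm_ring

lemma hSub_self (a : R × R) : D.hSub a a = (0, 0) := by
  ext
  · simp only [hSub, hAdd, hNeg]
    abel
  · simp only [hSub, hAdd, hNeg]
    noncomm_ring

lemma zero_mem_omegaMinSet (Δ : Set (R × R)) {I : Set R} (hI : D.IsInvIdeal I) :
    ((0 : R), (0 : R)) ∈ D.OmegaMinSet Δ I := by
  have h := OmegaMin.base (D := D) (Δ := Δ) 0 hI.zero_mem
  rwa [D.bar_zero, zero_mul, sub_zero] at h

end Heisenberg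

variable {D} in
def IsInvIdeal.toAddSubgroup {I : Set R} (hI : D.IsInvIdeal I) : AddSubgroup R where
  carrier := I
  add_mem' {x y} hx hy := hI.add_mem x hx y hy
  zero_mem' := hI.zero_mem
  neg_mem' {x} hx := hI.neg_mem x hx

section Forms

variable {n : ℕ}

lemma posIdx_neg_ne_self {i : Idx n} (hi : i ∈ posIdx n) : i.neg ≠ i := by
  have := (Finset.mem_filter.mp hi).2
  intro h
  have := congrArg Subtype.val h
  simp only [Idx.neg] at this
  omega

def bformPos (u v : Idx n → R) : R := ∑ i ∈ posIdx n, D.bar (u i) * v i.neg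

def bformNeg (u v : Idx n → R) : R := ∑ i ∈ posIdx n, D.bar (u i.neg) * D.lam * v i

lemma bform_eq (u v : Idx n → R) :
    D.bform u v = D.bformPos u v + D.bar (u (Idx.zero n)) * D.mu * v (Idx.zero n)
      + D.bformNeg u v := rfl

lemma qform_eq (u : Idx n → R) : D.qform u = (u (Idx.zero n), D.bformPos u u) := rfl

lemma bformPos_add (u v w : Idx n → R) :
    D.bformPos (u + v) w = D.bformPos u w + D.bformPos v w := by
  simp only [bformPos, Pi.add_apply, D.bar_add, add_mul, Finset.sum_add_distrib]

lemma bformPos_add_right (u v w : Idx n → R) :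
    D.bformPos u (v + w) = D.bformPos u v + D.bformPos u w := by
  simp only [bformPos, Pi.add_apply, mul_add, Finset.sum_add_distrib]

lemma bformPos_swap (u v : Idx n → R) :
    D.bformPos v u = D.bar (D.bformNeg u v) * D.lam := by
  rw [bformNeg, D.bar_sum, Finset.sum_mul]
  refine Finset.sum_congr rfl fun i _ => ?_
  rw [D.bar_mul, D.bar_mul, D.bar_bar]
  calc D.bar (v i) * u i.neg
      = D.bar (v i) * (D.bar D.lam * D.lam) * u i.neg * (D.bar D.lam * D.lam) := by
        rw [D.bar_lam_mul_lam]; noncomm_ring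
    _ = _ := by noncomm_ring

lemma qform_add (u v : Idx n → R) :
    D.qform (u + v) = D.hAdd (D.hAdd (D.qform u) (D.qform v))
      (0, D.bform u v - (D.bformNeg u v - D.bar (D.bformNeg u v) * D.lam)) := by
  simp only [qform_eq, bform_eq, hAdd, Pi.add_apply, D.bformPos_add, D.bformPos_add_right,
    D.bformPos_swap u v, mul_zero, sub_zero, Prod.mk.injEq]
  exact ⟨by abel, by noncomm_ring⟩

lemma bformPos_single_self (j : Idx n) (x : R) :
    D.bformPos (Pi.single j x) (Pi.single j x) = 0 := by
  refine Finset.sum_eq_zero fun i hi => ?_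
  rcases eq_or_ne i j with rfl | hij
  · rw [Pi.single_eq_of_ne (posIdx_neg_ne_self hi), mul_zero]
  · rw [Pi.single_eq_of_ne hij, D.bar_zero, zero_mul]

lemma qform_mul_right (u : Idx n → R) (r : R) :
    D.qform (fun i => u i * r) = D.hSMul (D.qform u) r := by
  simp only [qform_eq, hSMul, bformPos, Finset.mul_sum, Finset.sum_mul, D.bar_mul,
    Prod.mk.injEq, true_and]
  exact Finset.sum_congr rfl fun i _ => by noncomm_ring

lemma mulVec_mul_right {m ι : Type*} [Fintype ι] (A : Matrix m ι R) (u : ι → R) (r : R) :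
    A *ᵥ (fun i => u i * r) = fun i => (A *ᵥ u) i * r := by
  funext i
  simp only [Matrix.mulVec, dotProduct, Finset.sum_mul, mul_assoc]

lemma mulVec_mem {I : Set R} (hI : D.IsInvIdeal I) (A : Matrix (Idx n) (Idx n) R)
    {u : Idx n → R} (hu : ∀ i, u i ∈ I) (i : Idx n) : (A *ᵥ u) i ∈ I :=
  show ∑ k, A i k * u k ∈ hI.toAddSubgroup from
  hI.toAddSubgroup.sum_mem fun k _ => hI.mul_left _ _ (hu k)

lemma bformNeg_mem {I : Set R} (hI : D.IsInvIdeal I) {u : Idx n → R} (hu : ∀ i, u i ∈ I)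
    (v : Idx n → R) : D.bformNeg u v ∈ I :=
  hI.toAddSubgroup.sum_mem fun i _ =>
    hI.mul_right _ _ (hI.mul_right _ _ (hI.bar_mem _ (hu i.neg)))

end Forms

section Defect

variable {n : ℕ}

def qDefect (A : Matrix (Idx n) (Idx n) R) (u : Idx n → R) : R × R :=
  D.hSub (D.qform (A *ᵥ u)) (D.qform u)

lemma qDefect_mul_right (A : Matrix (Idx n) (Idx n) R) (u : Idx n → R) (r : R) :
    D.qDefect A (fun i => u i * r) = D.hSMul (D.qDefect A u) r := by
  rw [qDefect, qDefect, mulVec_mul_right, D.qform_mul_right, D.qform_mul_right, D.hSMul_hSub]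

lemma qDefect_add (A : Matrix (Idx n) (Idx n) R)
    (hA : ∀ u v, D.bform (A *ᵥ u) (A *ᵥ v) = D.bform u v) {v : Idx n → R}
    (hv : v (Idx.zero n) = 0) (w : Idx n → R) :
    D.qDefect A (v + w) = D.hAdd (D.hAdd (D.qDefect A v) (D.qDefect A w))
      (0, (D.bformNeg v w - D.bformNeg (A *ᵥ v) (A *ᵥ w))
        - D.bar (D.bformNeg v w - D.bformNeg (A *ᵥ v) (A *ᵥ w)) * D.lam) := by
  rw [qDefect, qDefect, qDefect, Matrix.mulVec_add, D.qform_add, D.qform_add, hA]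
  ext
  · simp only [hSub, hAdd, hNeg, qform_eq, hv]
    abel
  · simp only [hSub, hAdd, hNeg, qform_eq, hv, D.bar_add, D.bar_sub, D.bar_neg, neg_zero,
      D.bar_zero]
    noncomm_ring

lemma qDefect_single (A : Matrix (Idx n) (Idx n) R) (j : Idx n) (x : R) :
    D.qDefect A (Pi.single j x) = D.hSMul (D.qDefect A (Pi.single j 1)) x := by
  have hsingle : (Pi.single j x : Idx n → R) = fun i => (Pi.single j 1 : Idx n → R) i * x := by
    ext i
    by_cases h : i = j <;> simp [h]
  rw [hsingle, qDefect_mul_right]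

lemma qDefect_single_zero (A : Matrix (Idx n) (Idx n) R) (x : R) :
    D.qDefect A (Pi.single (Idx.zero n) x)
      = D.hSMul (D.hSub (D.qform fun i => A i (Idx.zero n)) (1, 0)) x := by
  rw [qDefect_single, qDefect, Matrix.mulVec_single_one, D.qform_eq (Pi.single _ 1),
    bformPos_single_self, Pi.single_eq_same]
  rfl

variable {Δ : Set (R × R)} {I : Set R} {σ : GLn R n}

lemma qDefect_single_mem (hσ : σ ∈ D.unitary Δ n) (j : Idx n) {x : R} (hx : x ∈ I) :
    D.qDefect σ.val (Pi.single j x) ∈ D.OmegaMinSet Δ I := by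
  rw [qDefect_single]
  exact OmegaMin.smul _ (hσ.2 _) x hx

lemma sum_single_mem (hI : D.IsInvIdeal I) {s : Finset (Idx n)} {v : Idx n → R}
    (hv : ∀ j ∈ s, v j ∈ I) (i : Idx n) : (∑ j ∈ s, Pi.single j (v j) : Idx n → R) i ∈ I := by
  rw [Finset.sum_apply, Finset.sum_pi_single]
  split_ifs with hi
  exacts [hv i hi, hI.zero_mem]

lemma qDefect_add_hSub_mem (hI : D.IsInvIdeal I) (hσ : σ ∈ D.unitary Δ n) {v : Idx n → R}
    (hv0 : v (Idx.zero n) = 0) (hvI : ∀ i, v i ∈ I) (hv : D.qDefect σ.val v ∈ D.OmegaMinSet Δ I)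
    (w : Idx n → R) :
    D.hSub (D.qDefect σ.val (v + w)) (D.qDefect σ.val w) ∈ D.OmegaMinSet Δ I := by
  rw [D.qDefect_add σ.val hσ.1 hv0, hSub_hAdd_hAdd_cancel]
  exact OmegaMin.add _ _ hv (OmegaMin.base _ (hI.toAddSubgroup.sub_mem
    (D.bformNeg_mem hI hvI w) (D.bformNeg_mem hI (D.mulVec_mem hI _ hvI) _)))

lemma qDefect_sum_single_mem (hI : D.IsInvIdeal I) (hσ : σ ∈ D.unitary Δ n)
    (v : Idx n → R) (s : Finset (Idx n)) (hs : Idx.zero n ∉ s) (hv : ∀ j ∈ s, v j ∈ I) :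
    D.qDefect σ.val (∑ j ∈ s, Pi.single j (v j)) ∈ D.OmegaMinSet Δ I := by
  induction s using Finset.induction_on with
  | empty =>
    rw [Finset.sum_empty, qDefect, Matrix.mulVec_zero, D.hSub_self]
    exact D.zero_mem_omegaMinSet Δ hI
  | insert j t hjt ih =>
    have hvt := D.sum_single_mem hI fun k hk => hv k (Finset.mem_insert_of_mem hk)
    have hvt0 : (∑ k ∈ t, Pi.single k (v k) : Idx n → R) (Idx.zero n) = 0 := by
      rw [Finset.sum_apply, Finset.sum_pi_single, if_neg fun h => hs (Finset.mem_insert_of_mem h)]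
    have ht := ih (fun h => hs (Finset.mem_insert_of_mem h))
      fun k hk => hv k (Finset.mem_insert_of_mem hk)
    rw [Finset.sum_insert hjt, add_comm, ← D.hSub_hAdd_cancel (D.qDefect σ.val (_ + _))
      (D.qDefect σ.val (Pi.single j (v j)))]
    exact OmegaMin.add _ _ (D.qDefect_add_hSub_mem hI hσ hvt0 hvt ht _)
      (D.qDefect_single_mem hσ j (hv j (Finset.mem_insert_self j t)))

end Defect

end OddFormRingData

theorem statement14_general {R : Type*} [Ring R] (D : OddFormRingData R)
    (Δ : Set (R × R)) (n : ℕ)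
    (I : Set R) (hI : D.IsInvIdeal I)
    (σ : GLn R n) (hσ : σ ∈ D.unitary Δ n)
    (u : Idx n → R) (hu : ∀ i : Idx n, i.1 ≠ 0 → u i ∈ I) :
    D.hSub (D.hSub (D.qform (Matrix.mulVec σ.val u)) (D.qform u))
        (D.hSMul (D.hSub (D.qform (fun i => σ.val i (Idx.zero n))) (1, 0)) (u (Idx.zero n)))
      ∈ D.OmegaMinSet Δ I := by
  set Θhb := Finset.univ.erase (Idx.zero n)
  have huΘhb : ∀ j ∈ Θhb, u j ∈ I := fun j hj =>
    hu j fun h => Finset.ne_of_mem_erase hj (Subtype.ext h)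
  set v : Idx n → R := ∑ j ∈ Θhb, Pi.single j (u j) with hv
  have hv0 : v (Idx.zero n) = 0 := by
    rw [hv, Finset.sum_apply, Finset.sum_pi_single, if_neg (Finset.notMem_erase _ _)]
  have hsplit : u = v + Pi.single (Idx.zero n) (u (Idx.zero n)) := by
    rw [hv, Finset.sum_erase_add _ _ (Finset.mem_univ _), Finset.univ_sum_single]
  have key := D.qDefect_add_hSub_mem hI hσ hv0 (D.sum_single_mem hI huΘhb)
    (D.qDefect_sum_single_mem hI hσ u Θhb (Finset.notMem_erase _ _) huΘhb)
    (Pi.single (Idx.zero n) (u (Idx.zero n)))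
  rwa [← hsplit, D.qDefect_single_zero] at key

/-- For `σ ∈ U_{2n+1}(R, Δ)` and `u ∈ M(I)`,
`q(σu) ∸ q(u) ≡ (q(σ_*0) ∸ (1,0)) • u₀ (mod Ω^I_min)`. -/
theorem statement14 {R : Type*} [Ring R] [Nontrivial R] (D : OddFormRingData R)
    (Δ : Set (R × R)) (hΔ : D.IsFormParam Δ) (n : ℕ)
    (I : Set R) (hI : D.IsInvIdeal I)
    (σ : GLn R n) (hσ : σ ∈ D.unitary Δ n)
    (u : Idx n → R) (hu : ∀ i : Idx n, i.1 ≠ 0 → u i ∈ I) :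
    D.hSub (D.hSub (D.qform (Matrix.mulVec σ.val u)) (D.qform u))
        (D.hSMul (D.hSub (D.qform (fun i => σ.val i (Idx.zero n))) (1, 0)) (u (Idx.zero n)))
      ∈ D.OmegaMinSet Δ I :=
  statement14_general D Δ n I hI σ hσ u hu
end
end

section
/- Let R be a semilocal ring and m ∈ ℕ. If the column (u₁,…,u_{m+1}) ∈ R^{m+1} is left unimodular, then there exists x ∈ R such that the column (u₁ + x·u_{m+1}, u₂, …, u_m) ∈ R^m is left unimodular. -/
open scoped BigOperators

noncomputable section

universe u

/-!
Semilocal rings have Bass's stable range one. Modulo the Jacobson radical the ring `S` is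
semisimple, and for `a ∈ S` the left annihilator `ker (· * a)` is isomorphic to `S ⧸ S a`, by
cancellation of finite-length semisimple modules (two distinct isomorphic simple submodules share
the graph of the isomorphism as a common complement). Gluing this isomorphism with a splitting of
`S b ↠ S ⧸ S a` gives `y` with `S (a + y b) = S`, and left invertibility lifts along the Jacobson
radical. Stable range one shortens a unimodular column `c u₁ + d u_{m+1} + ∑ vᵢ uᵢ = 1`: apply it
to the pair `(u₁, d u_{m+1} + ∑ vᵢ uᵢ)`.
-/

theorem Disjoint.isCompl_sup_of_sup_eq {α : Type*} [Lattice α] [BoundedOrder α] [IsModularLattice α]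
    {a b x y : α} (hab : Disjoint a b) (hx : a ⊔ b = x) (hxy : IsCompl x y) :
    IsCompl a (b ⊔ y) :=
  ⟨hab.disjoint_sup_right_of_disjoint_sup_left (hx ▸ hxy.disjoint),
    codisjoint_iff.mpr (by rw [← sup_assoc, hx, hxy.sup_eq_top])⟩

namespace Submodule

variable {R M : Type*} [Ring R] [AddCommGroup M] [Module R M]

theorem exists_isCompl_isCompl_of_disjoint [IsSemisimpleModule R M] {A B : Submodule R M}
    (e : A ≃ₗ[R] B) (hAB : Disjoint A B) : ∃ C : Submodule R M, IsCompl A C ∧ IsCompl B C := by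
  -- the graph `{a - e a}` is a complement of both `A` and `B` inside `A ⊔ B`
  set D := LinearMap.range (A.subtype - B.subtype ∘ₗ e.toLinearMap)
  have mem_D (a : A) : (a : M) - e a ∈ D := ⟨a, rfl⟩
  have hD : D ≤ A ⊔ B := by
    rintro _ ⟨a, rfl⟩
    exact sub_mem (mem_sup_left a.2) (mem_sup_right (e a).2)
  have hAD : Disjoint A D := by
    refine disjoint_def.mpr fun x hxA ⟨a, hxa⟩ => ?_
    have hea : ((e a : B) : M) ∈ A := by
      have : ((e a : B) : M) = a - x := by rw [← hxa]; simp
      exact this ▸ sub_mem a.2 hxA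
    have : a = 0 := by
      simpa using congrArg e.symm (Subtype.ext (disjoint_def.mp hAB _ hea (e a).2) : e a = 0)
    simp [← hxa, this]
  have hBD : Disjoint B D := by
    refine disjoint_def.mpr fun x hxB ⟨a, hxa⟩ => ?_
    have ha : ((a : A) : M) ∈ B := by
      have : (a : M) = x + e a := by rw [← hxa]; simp
      exact this ▸ add_mem hxB (e a).2
    have : a = 0 := Subtype.ext (disjoint_def.mp hAB _ a.2 ha)
    simp [← hxa, this]
  have hAD' : A ⊔ D = A ⊔ B := by
    refine le_antisymm (sup_le le_sup_left hD) (sup_le le_sup_left fun b hb => ?_)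
    have : b = (e.symm ⟨b, hb⟩ : M) - ((e.symm ⟨b, hb⟩ : M) - e (e.symm ⟨b, hb⟩)) := by simp
    exact this ▸ sub_mem (mem_sup_left (e.symm _).2) (mem_sup_right (mem_D _))
  have hBD' : B ⊔ D = A ⊔ B := by
    refine le_antisymm (sup_le le_sup_right hD) (sup_le (fun a ha => ?_) le_sup_left)
    have : a = (e ⟨a, ha⟩ : M) + (a - e ⟨a, ha⟩) := by abel
    exact this ▸ add_mem (mem_sup_left (e _).2) (mem_sup_right (mem_D ⟨a, ha⟩))
  obtain ⟨Y, hY⟩ := ComplementedLattice.exists_isCompl (A ⊔ B)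
  exact ⟨D ⊔ Y, hAD.isCompl_sup_of_sup_eq hAD' hY, hBD.isCompl_sup_of_sup_eq hBD' hY⟩

theorem nonempty_quotientEquiv_of_isSimpleModule [IsSemisimpleModule R M] {A B : Submodule R M}
    [IsSimpleModule R A] (e : A ≃ₗ[R] B) : Nonempty ((M ⧸ A) ≃ₗ[R] M ⧸ B) := by
  by_cases hAB : A = B
  · exact ⟨quotEquivOfEq A B hAB⟩
  have : IsSimpleModule R B := IsSimpleModule.congr e.symm
  obtain ⟨C, hA, hB⟩ := exists_isCompl_isCompl_of_disjoint e <|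
    (isSimpleModule_iff_isAtom.mp ‹_›).disjoint_of_ne (isSimpleModule_iff_isAtom.mp this) hAB
  exact ⟨(A.quotientEquivOfIsCompl C hA).trans (B.quotientEquivOfIsCompl C hB).symm⟩

end Submodule

section Cancellation

open LinearMap

variable {R : Type*} [Ring R] [IsSemisimpleRing R]

theorem LinearEquiv.nonempty_cancel_prod_left_of_isSimpleModule {S P Q : Type u} [AddCommGroup S]
    [Module R S] [AddCommGroup P] [Module R P] [AddCommGroup Q] [Module R Q] [IsSimpleModule R S]
    (e : (S × P) ≃ₗ[R] S × Q) : Nonempty (P ≃ₗ[R] Q) := by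
  have quotient_inl (X : Type u) [AddCommGroup X] [Module R X] :
      ((S × X) ⧸ range (inl R S X)) ≃ₗ[R] X :=
    (Submodule.quotEquivOfEq _ _ (ker_snd R S X).symm).trans
      ((snd R S X).quotKerEquivOfSurjective snd_surjective)
  have equiv_inl (X : Type u) [AddCommGroup X] [Module R X] : S ≃ₗ[R] range (inl R S X) :=
    LinearEquiv.ofInjective _ inl_injective
  have : IsSimpleModule R (range (inl R S Q)) := IsSimpleModule.congr (equiv_inl Q).symm
  obtain ⟨g⟩ := Submodule.nonempty_quotientEquiv_of_isSimpleModule <|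
    (equiv_inl Q).symm.trans ((equiv_inl P).trans (e.submoduleMap _))
  exact ⟨(quotient_inl P).symm.trans <| (Submodule.Quotient.equiv _ _ e rfl).trans <|
    g.symm.trans (quotient_inl Q)⟩

theorem LinearEquiv.nonempty_cancel_prod_left {T : Type u} [AddCommGroup T] [Module R T]
    (hT : IsFiniteLength R T) {P Q : Type u} [AddCommGroup P] [Module R P] [AddCommGroup Q]
    [Module R Q] (e : (T × P) ≃ₗ[R] T × Q) : Nonempty (P ≃ₗ[R] Q) := by
  induction hT generalizing P Q with
  | @of_subsingleton T _ _ _ =>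
    have snd_equiv (X : Type u) [AddCommGroup X] [Module R X] : (T × X) ≃ₗ[R] X :=
      LinearEquiv.ofBijective (snd R T X)
        ⟨fun x y h => Prod.ext (Subsingleton.elim _ _) h, snd_surjective⟩
    exact ⟨(snd_equiv P).symm.trans (e.trans (snd_equiv Q))⟩
  | @of_simple_quotient T _ _ N _ _ ih =>
    obtain ⟨C, hC⟩ := ComplementedLattice.exists_isCompl N
    have : IsSimpleModule R C := IsSimpleModule.congr (N.quotientEquivOfIsCompl C hC).symm
    have split (X : Type u) [AddCommGroup X] [Module R X] : (T × X) ≃ₗ[R] N × (C × X) :=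
      ((Submodule.prodEquivOfIsCompl N C hC).symm.prodCongr (LinearEquiv.refl R X)).trans
        (LinearEquiv.prodAssoc R N C X)
    obtain ⟨e'⟩ := ih ((split P).symm.trans (e.trans (split Q)))
    exact e'.nonempty_cancel_prod_left_of_isSimpleModule

theorem LinearMap.nonempty_ker_equiv_quotient_range {M : Type u} [AddCommGroup M] [Module R M]
    [Module.Finite R M] (f : M →ₗ[R] M) : Nonempty (ker f ≃ₗ[R] M ⧸ range f) := by
  obtain ⟨C, hC⟩ := ComplementedLattice.exists_isCompl (ker f)
  obtain ⟨D, hD⟩ := ComplementedLattice.exists_isCompl (range f)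
  have eC : C ≃ₗ[R] range f := ((ker f).quotientEquivOfIsCompl C hC).symm.trans f.quotKerEquivRange
  have e : (range f × ker f) ≃ₗ[R] range f × D :=
    (eC.symm.prodCongr (LinearEquiv.refl R _)).trans <| (LinearEquiv.prodComm R _ _).trans <|
      (Submodule.prodEquivOfIsCompl _ _ hC).trans (Submodule.prodEquivOfIsCompl _ _ hD).symm
  obtain ⟨g⟩ := e.nonempty_cancel_prod_left
    (isFiniteLength_iff_isNoetherian_isArtinian.mpr ⟨inferInstance, inferInstance⟩)
  exact ⟨g.trans ((range f).quotientEquivOfIsCompl D hD).symm⟩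

end Cancellation

def HasStableRangeOne (R : Type*) [Ring R] : Prop :=
  ∀ a b : R, (∃ c d : R, c * a + d * b = 1) → ∃ y s : R, s * (a + y * b) = 1

open LinearMap in
theorem IsSemisimpleRing.hasStableRangeOne (S : Type*) [Ring S] [IsSemisimpleRing S] :
    HasStableRangeOne S := by
  rintro a b ⟨c, d, hcd⟩
  set φ := toSpanSingleton S S a
  set π := (range φ).mkQ
  have hφ (s : S) : φ s = s * a := rfl
  have hsurj : Function.Surjective (π ∘ₗ toSpanSingleton S S b) := by
    refine fun t => (range φ).mkQ_surjective t |>.elim fun r hr => ⟨r * d, hr ▸ ?_⟩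
    refine (Submodule.Quotient.eq _).mpr ⟨-(r * c), ?_⟩
    simp only [hφ, toSpanSingleton_apply, smul_eq_mul]
    calc -(r * c) * a = r * d * b - (r * (c * a) + r * (d * b)) := by noncomm_ring
      _ = r * d * b - r := by rw [← mul_add, hcd, mul_one]
  obtain ⟨lift, hlift⟩ := IsSemisimpleModule.lifting_property _ hsurj LinearMap.id
  obtain ⟨θ⟩ := φ.nonempty_ker_equiv_quotient_range
  obtain ⟨C, hC⟩ := ComplementedLattice.exists_isCompl (ker φ)
  set p := (ker φ).projectionOnto C hC
  set ξ := lift ∘ₗ θ.toLinearMap ∘ₗ p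
  have hξ (s : S) : ξ s = s * ξ 1 := by simpa using ξ.map_smul s 1
  -- `s ↦ s * (a + ξ 1 * b) = s * a + ξ s * b` maps `ker φ` onto `S` modulo `S a` (through `θ`)
  -- and `C` onto `S a`, hence is onto
  obtain ⟨k, hk⟩ := θ.surjective (π 1)
  obtain ⟨r, hr⟩ : 1 - ξ k * b ∈ range φ := by
    refine (Submodule.Quotient.eq _).mp ?_
    have h := LinearMap.congr_fun hlift (θ k)
    simp only [comp_apply, id_apply, toSpanSingleton_apply, smul_eq_mul] at h
    simp only [ξ, p, comp_apply, Submodule.projectionOnto_apply_left]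
    exact hk.symm.trans h.symm
  have hξr : ξ (r - p r) = 0 := by
    have hpp : p (p r : S) = p r := Submodule.projectionOnto_apply_left hC (p r)
    simp only [ξ, comp_apply, map_sub, hpp, sub_self]
  have hka : (k : S) * a = 0 := k.2
  have hpra : (p r : S) * a = 0 := (p r).2
  refine ⟨ξ 1, k + (r - p r), ?_⟩
  rw [mul_add, ← mul_assoc, ← hξ, map_add, hξr, add_zero, add_mul, sub_mul, hka, hpra, sub_zero,
    zero_add, ← hφ r, hr, sub_add_cancel]

theorem Ideal.Quotient.isSemisimpleRing {R : Type*} [Ring R] (I : Ideal R) [I.IsTwoSided]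
    [IsSemisimpleModule R (R ⧸ I)] : IsSemisimpleRing (R ⧸ I) :=
  let id' : (R ⧸ I) →ₛₗ[Ideal.Quotient.mk I] R ⧸ I :=
    { toFun := id
      map_add' := fun _ _ => rfl
      map_smul' := fun _ x => Quotient.inductionOn' x fun _ => rfl }
  (id'.isSemisimpleModule_iff_of_bijective Function.bijective_id).mp ‹_›

theorem HasStableRangeOne.of_quotient {R : Type*} [Ring R] {I : Ideal R} [I.IsTwoSided]
    (hI : I ≤ Ring.jacobson R) (h : HasStableRangeOne (R ⧸ I)) : HasStableRangeOne R := by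
  rintro a b ⟨c, d, hcd⟩
  obtain ⟨y', s', hys⟩ := h (Ideal.Quotient.mk I a) (Ideal.Quotient.mk I b)
    ⟨Ideal.Quotient.mk I c, Ideal.Quotient.mk I d, by
      simp only [← map_mul, ← map_add, hcd, map_one]⟩
  obtain ⟨y, rfl⟩ := Ideal.Quotient.mk_surjective y'
  obtain ⟨s, rfl⟩ := Ideal.Quotient.mk_surjective s'
  have hJ : s * (a + y * b) - 1 ∈ (⊥ : Ideal R).jacobson := by
    rw [Ideal.jacobson_bot]
    refine hI (Ideal.Quotient.eq.mp ?_)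
    simpa only [map_mul, map_add, map_one] using hys
  obtain ⟨t, ht⟩ := Ideal.exists_mul_sub_mem_of_sub_one_mem_jacobson _ hJ
  exact ⟨y, t * s, by rw [mul_assoc]; exact sub_eq_zero.mp ht⟩

theorem IsSemilocalRing.hasStableRangeOne {R : Type*} [Ring R] (h : IsSemilocalRing R) :
    HasStableRangeOne R := by
  rw [IsSemilocalRing, jacobsonRadical, ← Ring.jacobson_eq_sInf_isMaximal] at h
  have := Ideal.Quotient.isSemisimpleRing (Ring.jacobson R)
  exact .of_quotient le_rfl (IsSemisimpleRing.hasStableRangeOne _)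

theorem HasStableRangeOne.exists_mul_add_sum_eq_one {R ι : Type*} [Ring R] [Fintype ι]
    (h : HasStableRangeOne R) {a b : R} {w : ι → R}
    (hu : ∃ c d : R, ∃ v : ι → R, c * a + d * b + ∑ i, v i * w i = 1) :
    ∃ x s : R, ∃ v : ι → R, s * (a + x * b) + ∑ i, v i * w i = 1 := by
  obtain ⟨c, d, v, hv⟩ := hu
  obtain ⟨y, s, hs⟩ := h a (d * b + ∑ i, v i * w i) ⟨c, 1, by rw [one_mul, ← add_assoc, hv]⟩
  refine ⟨y * d, s, fun i => s * y * v i, ?_⟩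
  rw [← hs]
  simp only [mul_add, Finset.mul_sum, mul_assoc, add_assoc]

theorem statement17_general {R : Type*} [Ring R] (hsl : IsSemilocalRing R)
    (m : ℕ) (hm : 1 ≤ m) (u : Fin (m + 1) → R)
    (hu : ∃ v : Fin (m + 1) → R, ∑ i, v i * u i = 1) :
    ∃ x : R, ∃ v : Fin m → R,
      ∑ i, v i * (u i.castSucc + if (i : ℕ) = 0 then x * u (Fin.last m) else 0) = 1 := by
  obtain ⟨k, rfl⟩ : ∃ k, m = k + 1 := ⟨m - 1, by omega⟩
  obtain ⟨v, hv⟩ := hu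
  obtain ⟨x, s, t, hst⟩ := hsl.hasStableRangeOne.exists_mul_add_sum_eq_one
    (a := u 0) (b := u (Fin.last _)) (w := fun j : Fin k => u j.castSucc.succ)
    ⟨v 0, v (Fin.last _), fun j => v j.castSucc.succ, by
      rw [Fin.sum_univ_castSucc, Fin.sum_univ_succ] at hv
      simpa [add_right_comm] using hv⟩
  exact ⟨x, Fin.cons s t, by simpa [Fin.sum_univ_succ] using hst⟩

/-- Shortening of left unimodular columns over a semilocal ring. -/
theorem statement17 {R : Type*} [Ring R] [Nontrivial R] (hsl : IsSemilocalRing R)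
    (m : ℕ) (hm : 1 ≤ m) (u : Fin (m + 1) → R)
    (hu : ∃ v : Fin (m + 1) → R, ∑ i, v i * u i = 1) :
    ∃ x : R, ∃ v : Fin m → R,
      ∑ i, v i * (u i.castSucc + if (i : ℕ) = 0 then x * u (Fin.last m) else 0) = 1 :=
  statement17_general hsl m hm u hu
end
end
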